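/- Let E₁ = ε # φ₀. Then lim_{n→∞} 2ⁿ E₁(2^{−n}) = 1/3 + 5/(14√7). -/

import Mathlib

open scoped BigOperators

noncomputable section

attribute [local instance] Classical.propDecidable

/-- `I`: the set of dyadic rationals in `[0,1]`. -/
def dyadicI : Set ℚ := {t | 0 ≤ t ∧ t ≤ 1 ∧ ∃ i n : ℕ, t = (i : ℚ) / 2 ^ n}

/-- `X` is the ℚ-vector space of functions `I → ℚ`. -/
abbrev X : Type := dyadicI → ℚ

lemma dyadicI_mem {i n : ℕ} (h : i ≤ 2 ^ n) : (i : ℚ) / 2 ^ n ∈ dyadicI := by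
  refine ⟨by positivity, ?_, i, n, rfl⟩
  rw [div_le_one (by positivity)]
  exact_mod_cast h

lemma zero_mem_dyadicI : (0 : ℚ) ∈ dyadicI := by
  simpa using dyadicI_mem (i := 0) (n := 0) (by norm_num)

lemma one_mem_dyadicI : (1 : ℚ) ∈ dyadicI := by
  simpa using dyadicI_mem (i := 1) (n := 0) (by norm_num)

lemma half_mem_dyadicI : (1 / 2 : ℚ) ∈ dyadicI := by
  have := dyadicI_mem (i := 1) (n := 1) (by norm_num)
  norm_num at this ⊢
  exact this

/-- Evaluation of `α : X` at a rational, extended by `0` off `I`. -/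
def evI (α : X) (t : ℚ) : ℚ := if h : t ∈ dyadicI then α ⟨t, h⟩ else 0

/-- The map `T₀ : X → X`, `(T₀ α)(t) = α (t/2)`. -/
def T0 (α : X) : X := fun t => evI α (t.1 / 2)

/-- The map `T₁ : X → X`, `(T₁ α)(t) = α ((1+t)/2)`. -/
def T1 (α : X) : X := fun t => evI α ((1 + t.1) / 2)

/-- Auxiliary recursion (on the exponent of the denominator) defining `α # β`. -/
def hashAux : ℕ → X → X → ℚ → ℚ
  | 0, α, β, t =>
      if t = 0 then 0 else (evI α 1 - evI α 0) * (evI β 1 - evI β 0)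
  | n + 1, α, β, t =>
      if t ≤ 1 / 2 then
        hashAux n (T0 α) (T0 β) (2 * t) + hashAux n (T1 α) (T1 β) (2 * t)
      else
        hashAux n (T0 α) (T0 β) 1 + hashAux n (T1 α) (T1 β) 1 +
          hashAux n (T0 α) (T1 β) (2 * t - 1) + hashAux n (T1 α) (T0 β) (2 * t - 1)

/-- The product `α # β` on `X`. -/
def hash (α β : X) : X := fun t => hashAux (padicValNat 2 t.1.den) α β t.1

/-- The element `t ↦ t` of `X`. -/
def tId : X := fun t => t.1

/-- The element `ε : t ↦ t − t²` of `X`. -/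
def epsX : X := fun t => t.1 - t.1 ^ 2

/-- The constant function `1` in `X`. -/
def oneX : X := fun _ => (1 : ℚ)

/-- Convexity: `2α(i/q) ≥ α((i−1)/q) + α((i+1)/q)` for all powers of two `q = 2^n`, `0 < i < q`. -/
def ConvexX (α : X) : Prop :=
  ∀ n i : ℕ, 0 < i → i < 2 ^ n →
    evI α (((i : ℚ) - 1) / 2 ^ n) + evI α (((i : ℚ) + 1) / 2 ^ n)
      ≤ 2 * evI α ((i : ℚ) / 2 ^ n)

/-- `α` is Lipschitz with constant `m`. -/
def LipschitzQ (m : ℚ) (α : X) : Prop :=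
  ∀ s t : dyadicI, |α s - α t| ≤ m * |s.1 - t.1|

/-- The point `2^{-n}` of `I`. -/
def invPow (n : ℕ) : dyadicI :=
  ⟨1 / 2 ^ n, by simpa using dyadicI_mem (i := 1) (n := n) Nat.one_le_two_pow⟩

/-- `μ` is the Hilbert–Kunz multiplicity of `α`, i.e. `μ = lim 2^n α(2^{-n})`. -/
def IsHKmu (α : X) (μ : ℝ) : Prop :=
  Filter.Tendsto (fun n : ℕ => ((2 ^ n * α (invPow n) : ℚ) : ℝ)) Filter.atTop (nhds μ)

/-- The series `S_α = Σ α(2^{-n}) (2w)^n = Σ (2^n α(2^{-n})) w^n`. -/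
def hkSeries (α : X) : PowerSeries ℚ := PowerSeries.mk fun n => 2 ^ n * α (invPow n)

/-- Auxiliary recursion defining the functions `φ_m`. -/
def phiAux : ℕ → ℕ → ℚ → ℚ
  | 0, _, _ => 0
  | n + 1, m, t =>
      if t ≤ 1 / 2 then
        if m % 2 = 0 then (phiAux n (m + 1) (2 * t) + (8 * (m : ℚ) + 6) * t) / 8
        else (phiAux n (m - 1) (2 * t) + ((2 * t) - (2 * t) ^ 2) + (8 * (m : ℚ) + 6) * t) / 8
      else
        if m = 0 then (phiAux n 0 (2 * t - 1) + 6 * (1 - t)) / 8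
        else if m % 2 = 0 then
          (phiAux n (m - 1) (2 * t - 1) + ((2 * t - 1) - (2 * t - 1) ^ 2)
            + (8 * (m : ℚ) + 6) * (1 - t)) / 8
        else (phiAux n (m + 1) (2 * t - 1) + (8 * (m : ℚ) + 6) * (1 - t)) / 8

/-- The functions `φ_m ∈ X` of Definition 2.2. -/
def phiM (m : ℕ) : X := fun t => phiAux (padicValNat 2 t.1.den) m t.1

/-- `ℕ` with the Nim-sum (bitwise XOR) as its (commutative) monoid operation. -/
def NimNat : Type := ℕ

instance : CommMonoid NimNat where
  mul a b := Nat.xor a b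
  one := (0 : ℕ)
  mul_assoc := Nat.xor_assoc
  mul_comm := Nat.xor_comm
  one_mul := Nat.zero_xor
  mul_one := Nat.xor_zero

/-- The ring `Γ`: free `ℤ`-module on `λ₀, λ₁, …` with `λᵢλⱼ = λ_{i XOR j}`. -/
abbrev GammaZ : Type := MonoidAlgebra ℤ NimNat

/-- The ring `Γ_Q = Γ ⊗ ℚ`. -/
abbrev GammaQ : Type := MonoidAlgebra ℚ NimNat

/-- The basis element `λᵢ` of `Γ`. -/
def lamZ (i : ℕ) : GammaZ := MonoidAlgebra.single (show NimNat from i) 1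

/-- The basis element `λᵢ` of `Γ_Q`. -/
def lamQ (i : ℕ) : GammaQ := MonoidAlgebra.single (show NimNat from i) 1

/-- `δ_r = λ₀ − λ₁ + ⋯ + (−1)^{r−1} λ_{r−1}` in `Γ`. -/
def deltaZ (r : ℕ) : GammaZ := ∑ i ∈ Finset.range r, ((-1 : ℤ) ^ i) • lamZ i

/-- `δ_r` in `Γ_Q`. -/
def deltaQ (r : ℕ) : GammaQ := ∑ i ∈ Finset.range r, ((-1 : ℚ) ^ i) • lamQ i

/-- `L_n(α) = Σ_{i=0}^{2^n−1} (α((i+1)/2^n) − α(i/2^n)) (−1)^i λᵢ ∈ Γ_Q`. -/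
def Ln (n : ℕ) (α : X) : GammaQ :=
  ∑ i ∈ Finset.range (2 ^ n),
    ((-1 : ℚ) ^ i * (evI α (((i : ℚ) + 1) / 2 ^ n) - evI α ((i : ℚ) / 2 ^ n))) • lamQ i

/-- The Hilbert–Kunz function `φ_f ∈ X` of a power series `f`:
`φ_f(i/q) = q^{-r} · dim_F F[[u₁,…,u_r]]/(u₁^q,…,u_r^q,f^i)`. -/
def phiF {F : Type} [Field F] {σ : Type} (f : MvPowerSeries σ F) : X := fun t =>
  ((Module.finrank F
      (MvPowerSeries σ F ⧸ Ideal.span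
        (Set.range (fun j : σ => (MvPowerSeries.X j : MvPowerSeries σ F) ^ t.1.den)
          ∪ {f ^ t.1.num.toNat}))) : ℚ)
    / (t.1.den : ℚ) ^ (Nat.card σ)

/-- The natural inclusion `F[[u_j : j ∈ σ]] → F[[u_j : j ∈ τ]]` along an injection `e : σ → τ`. -/
def embPS {F : Type} [Field F] {σ τ : Type} (e : σ → τ) (f : MvPowerSeries σ F) :
    MvPowerSeries τ F := fun d =>
  if h : ∃ d' : σ →₀ ℕ, Finsupp.mapDomain e d' = d then
    MvPowerSeries.coeff h.choose f
  else 0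

/-!
Evaluated at `2⁻ⁿ⁻¹`, the recursion for `#` reads
`(α # β)(2⁻ⁿ⁻¹) = (T₀α # T₀β)(2⁻ⁿ) + (T₁α # T₁β)(2⁻ⁿ)`.
The product is symmetric and bilinear, kills constants, and `(α # t)(2⁻ⁿ) = 2⁻ⁿ (α(1) - α(0))`;
moreover `T₀` and `T₁` map `ε` and `φ_m` into the span of `ε`, `t`, `1` and `φ_{m±1}`.
Hence `f_{m,n} = 2ⁿ (ε # φ_m)(2⁻ⁿ)` satisfies `16 f_{0,n+1} = f_{0,n} + f_{1,n} + 6` and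
`16 f_{m,n+1} = f_{m-1,n} + f_{m+1,n} + 8m + 6 + (1 - 4⁻ⁿ)/3` for `m ≥ 1`, using
`(ε # ε)(2⁻ⁿ) = (2⁻ⁿ - 8⁻ⁿ)/3`. If `c_m` is the solution of the limiting equations that grows at
most linearly, the errors satisfy `|f_{m,n} - c_m| ≤ (m + 1) 8⁻ⁿ + 4⁻ⁿ`, so `f_{0,n} → c_0`.
-/

lemma div_two_mem_dyadicI {t : ℚ} (ht : t ∈ dyadicI) : t / 2 ∈ dyadicI := by
  obtain ⟨h0, h1, i, n, rfl⟩ := ht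
  exact ⟨by positivity, by linarith, i, n + 1, by rw [pow_succ]; ring⟩

lemma one_add_div_two_mem_dyadicI {t : ℚ} (ht : t ∈ dyadicI) : (1 + t) / 2 ∈ dyadicI := by
  obtain ⟨h0, h1, i, n, rfl⟩ := ht
  refine ⟨by positivity, by linarith, 2 ^ n + i, n + 1, ?_⟩
  push_cast
  field_simp
  ring

lemma evI_of_mem (α : X) {t : ℚ} (h : t ∈ dyadicI) : evI α t = α ⟨t, h⟩ := dif_pos h

lemma evI_add (α β : X) (t : ℚ) : evI (α + β) t = evI α t + evI β t := by
  unfold evI; split_ifs <;> simp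

lemma evI_smul (a : ℚ) (α : X) (t : ℚ) : evI (a • α) t = a * evI α t := by
  unfold evI; split_ifs <;> simp

lemma evI_T0 (α : X) {t : ℚ} (ht : t ∈ dyadicI) : evI (T0 α) t = evI α (t / 2) :=
  evI_of_mem _ ht

lemma evI_T1 (α : X) {t : ℚ} (ht : t ∈ dyadicI) : evI (T1 α) t = evI α ((1 + t) / 2) :=
  evI_of_mem _ ht

lemma T0_apply (α : X) (t : dyadicI) : T0 α t = α ⟨t.1 / 2, div_two_mem_dyadicI t.2⟩ :=
  evI_of_mem _ _

lemma T1_apply (α : X) (t : dyadicI) :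
    T1 α t = α ⟨(1 + t.1) / 2, one_add_div_two_mem_dyadicI t.2⟩ :=
  evI_of_mem _ _

lemma T0_add (α β : X) : T0 (α + β) = T0 α + T0 β := by
  funext t; simp only [T0_apply, Pi.add_apply]

lemma T1_add (α β : X) : T1 (α + β) = T1 α + T1 β := by
  funext t; simp only [T1_apply, Pi.add_apply]

lemma T0_smul (a : ℚ) (α : X) : T0 (a • α) = a • T0 α := by
  funext t; simp only [T0_apply, Pi.smul_apply]

lemma T1_smul (a : ℚ) (α : X) : T1 (a • α) = a • T1 α := by
  funext t; simp only [T1_apply, Pi.smul_apply]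

lemma T0_oneX : T0 oneX = oneX := funext (T0_apply oneX)

lemma T1_oneX : T1 oneX = oneX := funext (T1_apply oneX)

lemma evI_oneX {t : ℚ} (ht : t ∈ dyadicI) : evI oneX t = 1 := evI_of_mem _ ht

lemma hashAux_add_left (n : ℕ) (α β γ : X) (t : ℚ) :
    hashAux n (α + β) γ t = hashAux n α γ t + hashAux n β γ t := by
  induction n generalizing α β γ t with
  | zero => simp only [hashAux, evI_add]; split_ifs <;> ring
  | succ n ih => simp only [hashAux, T0_add, T1_add, ih]; split_ifs <;> ring

lemma hashAux_smul_left (n : ℕ) (a : ℚ) (α β : X) (t : ℚ) :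
    hashAux n (a • α) β t = a * hashAux n α β t := by
  induction n generalizing α β t with
  | zero => simp only [hashAux, evI_smul]; split_ifs <;> ring
  | succ n ih => simp only [hashAux, T0_smul, T1_smul, ih]; split_ifs <;> ring

lemma hashAux_oneX_left (n : ℕ) (β : X) (t : ℚ) : hashAux n oneX β t = 0 := by
  induction n generalizing β t with
  | zero => simp [hashAux, evI_oneX one_mem_dyadicI, evI_oneX zero_mem_dyadicI]
  | succ n ih => simp only [hashAux, T0_oneX, T1_oneX, ih]; split_ifs <;> ring

lemma hashAux_comm (n : ℕ) (α β : X) (t : ℚ) : hashAux n α β t = hashAux n β α t := by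
  induction n generalizing α β t with
  | zero => simp only [hashAux]; split_ifs <;> ring
  | succ n ih =>
    simp only [hashAux, ih (T0 α), ih (T1 α)]
    split_ifs <;> ring

lemma hash_comm (α β : X) : hash α β = hash β α :=
  funext fun _ => hashAux_comm _ _ _ _

lemma hash_add_left (α β γ : X) : hash (α + β) γ = hash α γ + hash β γ :=
  funext fun _ => hashAux_add_left _ _ _ _ _

lemma hash_smul_left (a : ℚ) (α β : X) : hash (a • α) β = a • hash α β :=
  funext fun _ => hashAux_smul_left _ _ _ _ _

lemma hash_oneX_left (β : X) : hash oneX β = 0 :=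
  funext fun _ => hashAux_oneX_left _ _ _

lemma hash_sub_left (α β γ : X) : hash (α - β) γ = hash α γ - hash β γ := by
  rw [sub_eq_add_neg, ← neg_one_smul ℚ β, hash_add_left, hash_smul_left, neg_one_smul,
    sub_eq_add_neg]

lemma hash_add_right (α β γ : X) : hash α (β + γ) = hash α β + hash α γ := by
  rw [hash_comm, hash_add_left, hash_comm β, hash_comm γ]

lemma hash_sub_right (α β γ : X) : hash α (β - γ) = hash α β - hash α γ := by
  rw [hash_comm, hash_sub_left, hash_comm β, hash_comm γ]

lemma hash_smul_right (a : ℚ) (α β : X) : hash α (a • β) = a • hash α β := by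
  rw [hash_comm, hash_smul_left, hash_comm]

lemma hash_oneX_right (α : X) : hash α oneX = 0 := by
  rw [hash_comm, hash_oneX_left]

lemma padicValNat_den_invPow (n : ℕ) : padicValNat 2 (invPow n).1.den = n := by
  have hden : ((1 : ℚ) / 2 ^ n).den = 2 ^ n := by
    rw [one_div, show ((2 : ℚ) ^ n) = ((2 ^ n : ℕ) : ℚ) by push_cast; rfl]
    exact Rat.inv_natCast_den_of_pos (by positivity)
  rw [show (invPow n).1 = 1 / 2 ^ n from rfl, hden, padicValNat.prime_pow]

lemma hash_invPow (α β : X) (n : ℕ) : hash α β (invPow n) = hashAux n α β (1 / 2 ^ n) := by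
  show hashAux (padicValNat 2 (invPow n).1.den) α β (invPow n).1 = _
  rw [padicValNat_den_invPow]; rfl

lemma hash_invPow_zero (α β : X) :
    hash α β (invPow 0) = (evI α 1 - evI α 0) * (evI β 1 - evI β 0) := by
  rw [hash_invPow]; norm_num [hashAux]

lemma hash_invPow_succ (α β : X) (n : ℕ) :
    hash α β (invPow (n + 1)) =
      hash (T0 α) (T0 β) (invPow n) + hash (T1 α) (T1 β) (invPow n) := by
  have hle : (1 : ℚ) / 2 ^ (n + 1) ≤ 1 / 2 :=
    one_div_le_one_div_of_le (by norm_num) (le_self_pow₀ (by norm_num) (by omega))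
  rw [hash_invPow, hash_invPow, hash_invPow, hashAux, if_pos hle,
    show 2 * ((1 : ℚ) / 2 ^ (n + 1)) = 1 / 2 ^ n by rw [pow_succ]; field_simp]

lemma T0_tId : T0 tId = (1 / 2 : ℚ) • tId := by
  funext t; simp only [T0_apply, Pi.smul_apply, smul_eq_mul, tId]; ring

lemma T1_tId : T1 tId = (1 / 2 : ℚ) • (tId + oneX) := by
  funext t; simp only [T1_apply, Pi.smul_apply, Pi.add_apply, smul_eq_mul, tId, oneX]; ring

lemma evI_tId_zero : evI tId 0 = 0 := evI_of_mem _ zero_mem_dyadicI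

lemma evI_tId_one : evI tId 1 = 1 := evI_of_mem _ one_mem_dyadicI

lemma hash_tId_invPow (α : X) (n : ℕ) :
    hash α tId (invPow n) = (evI α 1 - evI α 0) / 2 ^ n := by
  induction n generalizing α with
  | zero =>
    rw [hash_invPow_zero, evI_tId_one, evI_tId_zero]
    ring
  | succ n ih =>
    rw [hash_invPow_succ, T0_tId, T1_tId, hash_smul_right, hash_smul_right, hash_add_right,
      hash_oneX_right, add_zero, Pi.smul_apply, Pi.smul_apply, ih, ih,
      evI_T0 _ one_mem_dyadicI, evI_T0 _ zero_mem_dyadicI, evI_T1 _ one_mem_dyadicI,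
      evI_T1 _ zero_mem_dyadicI, zero_div, add_zero, pow_succ]
    rw [show ((1 : ℚ) + 1) / 2 = 1 by norm_num]
    ring

lemma tId_hash_invPow (β : X) (n : ℕ) :
    hash tId β (invPow n) = (evI β 1 - evI β 0) / 2 ^ n := by
  rw [hash_comm, hash_tId_invPow]

lemma T0_epsX : T0 epsX = (1 / 4 : ℚ) • (epsX + tId) := by
  funext t; simp only [T0_apply, Pi.smul_apply, Pi.add_apply, smul_eq_mul, epsX, tId]; ring

lemma T1_epsX : T1 epsX = (1 / 4 : ℚ) • (epsX + oneX - tId) := by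
  funext t
  simp only [T1_apply, Pi.smul_apply, Pi.add_apply, Pi.sub_apply, smul_eq_mul, epsX, tId, oneX]
  ring

lemma evI_epsX_zero : evI epsX 0 = 0 := by
  rw [evI_of_mem _ zero_mem_dyadicI]; simp [epsX]

lemma evI_epsX_one : evI epsX 1 = 0 := by
  rw [evI_of_mem _ one_mem_dyadicI]; simp [epsX]

lemma hash_epsX_epsX_invPow (n : ℕ) :
    hash epsX epsX (invPow n) = (1 / 2 ^ n - 1 / 8 ^ n) / 3 := by
  induction n with
  | zero => rw [hash_invPow_zero, evI_epsX_zero, evI_epsX_one]; norm_num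
  | succ n ih =>
    rw [hash_invPow_succ, T0_epsX, T1_epsX]
    simp only [hash_smul_left, hash_smul_right, hash_add_left, hash_add_right, hash_sub_left,
      hash_sub_right, hash_oneX_left, hash_oneX_right, Pi.smul_apply, Pi.add_apply, Pi.sub_apply,
      Pi.zero_apply, smul_eq_mul, ih, hash_tId_invPow, tId_hash_invPow, evI_epsX_zero,
      evI_epsX_one, evI_tId_zero, evI_tId_one, pow_succ]
    field_simp
    ring

lemma phiAux_zero (n m : ℕ) : phiAux n m 0 = 0 := by
  induction n generalizing m with
  | zero => rfl
  | succ n ih => by_cases h : m % 2 = 0 <;> norm_num [phiAux, h, ih]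

lemma phiAux_one (n m : ℕ) : phiAux n m 1 = 0 := by
  induction n generalizing m with
  | zero => rfl
  | succ n ih =>
    by_cases h0 : m = 0
    · norm_num [phiAux, h0, ih]
    · by_cases h : m % 2 = 0 <;> norm_num [phiAux, h0, h, ih]

lemma phiAux_succ_div_two_pow (n m i : ℕ) (hi : i ≤ 2 ^ n) :
    phiAux (n + 1) m (i / 2 ^ n) = phiAux n m (i / 2 ^ n) := by
  induction n generalizing m i with
  | zero =>
    interval_cases i <;> simp [phiAux_zero, phiAux_one]
  | succ k ih =>
    rw [phiAux.eq_2 m _ (k + 1), phiAux.eq_2 m _ k]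
    by_cases hle : (i : ℚ) / 2 ^ (k + 1) ≤ 1 / 2
    · have hi' : i ≤ 2 ^ k := by
        rw [div_le_iff₀ (by positivity), pow_succ] at hle
        exact_mod_cast (by linarith : (i : ℚ) ≤ 2 ^ k)
      rw [if_pos hle, if_pos hle,
        show 2 * ((i : ℚ) / 2 ^ (k + 1)) = i / 2 ^ k by rw [pow_succ]; field_simp]
      simp only [ih _ _ hi']
    · have hi' : 2 ^ k ≤ i := by
        rw [not_le, lt_div_iff₀ (by positivity), pow_succ] at hle
        exact_mod_cast (by linarith : (2 : ℚ) ^ k ≤ i)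
      have hsub : i - 2 ^ k ≤ 2 ^ k := by rw [pow_succ] at hi; omega
      rw [if_neg hle, if_neg hle,
        show 2 * ((i : ℚ) / 2 ^ (k + 1)) - 1 = ((i - 2 ^ k : ℕ) : ℚ) / 2 ^ k by
          rw [Nat.cast_sub hi', pow_succ]; push_cast; field_simp]
      simp only [ih _ _ hsub]

lemma phiAux_div_two_pow_of_le {k n : ℕ} (hkn : k ≤ n) (m a : ℕ) (ha : a ≤ 2 ^ k) :
    phiAux n m (a / 2 ^ k) = phiAux k m (a / 2 ^ k) := by
  induction n, hkn using Nat.le_induction with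
  | base => rfl
  | succ n hkn ih =>
    have hpow : 2 ^ n = 2 ^ (n - k) * 2 ^ k := by rw [← pow_add, Nat.sub_add_cancel hkn]
    have h : (a : ℚ) / 2 ^ k = ((2 ^ (n - k) * a : ℕ) : ℚ) / 2 ^ n := by
      rw [show (2 : ℚ) ^ n = 2 ^ (n - k) * 2 ^ k by exact_mod_cast hpow]; push_cast; field_simp
    rw [h, phiAux_succ_div_two_pow _ _ _ (by rw [hpow]; gcongr), ← h, ih]

lemma den_dvd_two_pow {t : ℚ} {i n : ℕ} (h : t = i / 2 ^ n) : t.den ∣ 2 ^ n := by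
  have hd := Rat.den_dvd i (2 ^ n)
  rw [Rat.divInt_eq_div, Int.cast_natCast, Int.cast_pow, Int.cast_ofNat, ← h] at hd
  exact_mod_cast hd

lemma phiM_apply (m : ℕ) (t : dyadicI) {i n : ℕ} (h : t.1 = i / 2 ^ n) :
    phiM m t = phiAux n m t.1 := by
  obtain ⟨j, hjn, hj⟩ := (Nat.dvd_prime_pow Nat.prime_two).1 (den_dvd_two_pow h)
  have ht : t.1 = (t.1.num.toNat : ℚ) / 2 ^ j := by
    have hnum : ((t.1.num.toNat : ℕ) : ℚ) = t.1.num := by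
      exact_mod_cast Int.toNat_of_nonneg (Rat.num_nonneg.2 t.2.1)
    rw [hnum, ← Nat.cast_two, ← Nat.cast_pow, ← hj, Rat.num_div_den]
  have ha : t.1.num.toNat ≤ 2 ^ j := by
    have h1 := t.2.2.1
    rw [ht, div_le_one (by positivity)] at h1
    exact_mod_cast h1
  show phiAux (padicValNat 2 t.1.den) m t.1 = _
  rw [hj, padicValNat.prime_pow, ht, phiAux_div_two_pow_of_le hjn _ _ ha]

lemma T0_phiM_apply (m : ℕ) (t : dyadicI) {i n : ℕ} (h : t.1 = i / 2 ^ n) :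
    T0 (phiM m) t = phiAux (n + 1) m (t.1 / 2) := by
  rw [T0_apply, phiM_apply m _ (i := i) (n := n + 1)
    (by show t.1 / 2 = _; rw [h, pow_succ]; ring)]

lemma T1_phiM_apply (m : ℕ) (t : dyadicI) {i n : ℕ} (h : t.1 = i / 2 ^ n) :
    T1 (phiM m) t = phiAux (n + 1) m ((1 + t.1) / 2) := by
  rw [T1_apply, phiM_apply m _ (i := 2 ^ n + i) (n := n + 1)
    (by show (1 + t.1) / 2 = _; rw [h, pow_succ]; push_cast; field_simp)]

lemma T0_phiM_of_even {m : ℕ} (hm : m % 2 = 0) :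
    T0 (phiM m) = (1 / 8 : ℚ) • phiM (m + 1) + ((4 * m + 3) / 8 : ℚ) • tId := by
  funext t
  obtain ⟨i, n, h⟩ := t.2.2.2
  have hle : t.1 / 2 ≤ 1 / 2 := by linarith [t.2.2.1]
  have h2 : 2 * (t.1 / 2) = t.1 := by ring
  simp only [T0_phiM_apply m t h, phiAux.eq_2, if_pos hle, if_pos hm, Pi.add_apply,
    Pi.smul_apply, smul_eq_mul, phiM_apply _ t h, tId, h2]
  ring

lemma T0_phiM_of_odd {m : ℕ} (hm : m % 2 = 1) :
    T0 (phiM m) = (1 / 8 : ℚ) • (phiM (m - 1) + epsX) + ((4 * m + 3) / 8 : ℚ) • tId := by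
  funext t
  obtain ⟨i, n, h⟩ := t.2.2.2
  have hle : t.1 / 2 ≤ 1 / 2 := by linarith [t.2.2.1]
  have h2 : 2 * (t.1 / 2) = t.1 := by ring
  simp only [T0_phiM_apply m t h, phiAux.eq_2, if_pos hle, if_neg (by omega : ¬m % 2 = 0),
    Pi.add_apply, Pi.smul_apply, smul_eq_mul, phiM_apply _ t h, tId, epsX, h2]
  ring

lemma T1_phiM_zero : T1 (phiM 0) = (1 / 8 : ℚ) • phiM 0 + (3 / 8 : ℚ) • (oneX - tId) := by
  funext t
  obtain ⟨i, n, h⟩ := t.2.2.2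
  have h2 : 2 * ((1 + t.1) / 2) - 1 = t.1 := by ring
  simp only [h2, T1_phiM_apply 0 t h, phiAux.eq_2, Pi.add_apply, Pi.sub_apply, Pi.smul_apply,
    smul_eq_mul, phiM_apply _ t h, tId, oneX]
  rcases t.2.1.eq_or_lt with h0 | h0
  · norm_num [← h0, phiAux_zero, phiAux_one]
  · rw [if_neg (by linarith), if_true]
    ring

lemma T1_phiM_of_even {m : ℕ} (hm : m % 2 = 0) (h0 : m ≠ 0) :
    T1 (phiM m) =
      (1 / 8 : ℚ) • (phiM (m - 1) + epsX) + ((4 * m + 3) / 8 : ℚ) • (oneX - tId) := by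
  funext t
  obtain ⟨i, n, h⟩ := t.2.2.2
  have h2 : 2 * ((1 + t.1) / 2) - 1 = t.1 := by ring
  simp only [h2, T1_phiM_apply m t h, phiAux.eq_2, Pi.add_apply, Pi.sub_apply, Pi.smul_apply,
    smul_eq_mul, phiM_apply _ t h, tId, oneX, epsX]
  rcases t.2.1.eq_or_lt with ht | ht
  · norm_num [← ht, phiAux_zero, phiAux_one, hm]
    ring
  · rw [if_neg (by linarith), if_neg h0, if_pos hm]
    ring

lemma T1_phiM_of_odd {m : ℕ} (hm : m % 2 = 1) :
    T1 (phiM m) = (1 / 8 : ℚ) • phiM (m + 1) + ((4 * m + 3) / 8 : ℚ) • (oneX - tId) := by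
  funext t
  obtain ⟨i, n, h⟩ := t.2.2.2
  have h2 : 2 * ((1 + t.1) / 2) - 1 = t.1 := by ring
  simp only [h2, T1_phiM_apply m t h, phiAux.eq_2, Pi.add_apply, Pi.sub_apply, Pi.smul_apply,
    smul_eq_mul, phiM_apply _ t h, tId, oneX]
  rcases t.2.1.eq_or_lt with ht | ht
  · norm_num [← ht, phiAux_zero, phiAux_one, hm]
    ring
  · rw [if_neg (by linarith), if_neg (by omega), if_neg (by omega)]
    ring

lemma evI_phiM_zero (m : ℕ) : evI (phiM m) 0 = 0 := by
  rw [evI_of_mem _ zero_mem_dyadicI, phiM_apply m _ (i := 0) (n := 0) (by simp)]; rfl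

lemma evI_phiM_one (m : ℕ) : evI (phiM m) 1 = 0 := by
  rw [evI_of_mem _ one_mem_dyadicI, phiM_apply m _ (i := 1) (n := 0) (by simp)]; rfl

lemma hash_epsX_phiM_zero_invPow_succ (n : ℕ) :
    hash epsX (phiM 0) (invPow (n + 1)) =
      (hash epsX (phiM 0) (invPow n) + hash epsX (phiM 1) (invPow n) + 6 / 2 ^ n) / 32 := by
  rw [hash_invPow_succ, T0_epsX, T1_epsX, T0_phiM_of_even (m := 0) rfl, T1_phiM_zero]
  simp only [hash_smul_left, hash_smul_right, hash_add_left, hash_add_right, hash_sub_left,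
    hash_sub_right, hash_oneX_left, hash_oneX_right, Pi.smul_apply, Pi.add_apply, Pi.sub_apply,
    Pi.zero_apply, smul_eq_mul, hash_tId_invPow, tId_hash_invPow, evI_epsX_zero, evI_epsX_one,
    evI_phiM_zero, evI_phiM_one, evI_tId_zero, evI_tId_one]
  push_cast
  ring

lemma hash_epsX_phiM_succ_invPow_succ (m n : ℕ) :
    hash epsX (phiM (m + 1)) (invPow (n + 1)) =
      (hash epsX (phiM m) (invPow n) + hash epsX (phiM (m + 2)) (invPow n)
        + hash epsX epsX (invPow n) + (8 * m + 14) / 2 ^ n) / 32 := by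
  rw [hash_invPow_succ, T0_epsX, T1_epsX]
  rcases Nat.mod_two_eq_zero_or_one (m + 1) with hm | hm <;>
    [rw [T0_phiM_of_even hm, T1_phiM_of_even hm (by omega)];
     rw [T0_phiM_of_odd hm, T1_phiM_of_odd hm]] <;>
  · simp only [hash_smul_left, hash_smul_right, hash_add_left, hash_add_right, hash_sub_left,
      hash_sub_right, hash_oneX_left, hash_oneX_right, Pi.smul_apply, Pi.add_apply, Pi.sub_apply,
      Pi.zero_apply, smul_eq_mul, hash_tId_invPow, tId_hash_invPow, evI_epsX_zero, evI_epsX_one,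
      evI_phiM_zero, evI_phiM_one, evI_tId_zero, evI_tId_one, add_tsub_cancel_right]
    push_cast
    ring

/-- In `hs`, `m - 1` is truncated: for `m = 0` the left neighbour of `d 0` is `d 0` itself. -/
lemma tendsto_zero_of_abs_le_neighbors (d : ℕ → ℕ → ℝ) (h0 : ∀ m, |d m 0| ≤ m + 1)
    (hs : ∀ m n, |d m (n + 1)| ≤ (|d (m - 1) n| + |d (m + 1) n|) / 16 + (1 / 4) ^ n / 48)
    (m : ℕ) : Filter.Tendsto (d m) Filter.atTop (nhds 0) := by
  have hbound : ∀ n m, |d m n| ≤ (m + 1) * (1 / 8) ^ n + (1 / 4) ^ n := by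
    intro n
    induction n with
    | zero => intro m; linarith [h0 m]
    | succ n ih =>
      intro m
      have hm : ((m - 1 : ℕ) : ℝ) ≤ m := by exact_mod_cast Nat.sub_le m 1
      have h8 : (0 : ℝ) ≤ (1 / 8) ^ n := by positivity
      have h84 : (1 / 8 : ℝ) ^ n ≤ (1 / 4) ^ n :=
        pow_le_pow_left₀ (by norm_num) (by norm_num) n
      calc |d m (n + 1)|
          ≤ (((m - 1 : ℕ) + 1) * (1 / 8) ^ n + (1 / 4) ^ n
              + (((m + 1 : ℕ) : ℝ) + 1) * (1 / 8) ^ n + (1 / 4) ^ n) / 16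
            + (1 / 4) ^ n / 48 := by
            linarith [hs m n, ih (m - 1), ih (m + 1)]
        _ ≤ (m + 1) * (1 / 8) ^ (n + 1) + (1 / 4) ^ (n + 1) := by
            rw [pow_succ, pow_succ]; push_cast; nlinarith [mul_le_mul_of_nonneg_right hm h8]
  have hlim : Filter.Tendsto (fun n : ℕ => ((m : ℝ) + 1) * (1 / 8) ^ n + (1 / 4) ^ n)
      Filter.atTop (nhds 0) := by
    have h8 := tendsto_pow_atTop_nhds_zero_of_lt_one (r := (1 / 8 : ℝ)) (by norm_num) (by norm_num)
    have h4 := tendsto_pow_atTop_nhds_zero_of_lt_one (r := (1 / 4 : ℝ)) (by norm_num) (by norm_num)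
    simpa using (h8.const_mul ((m : ℝ) + 1)).add h4
  exact squeeze_zero_norm (fun n => hbound n m) hlim

/-- An affine particular solution of `16 c_{m+1} = c_m + c_{m+2} + 8m + 43/3`, plus a multiple of
`rᵐ` with `r = 8 - 3√7` the root of `x² - 16x + 1` in `(0, 1)`; the multiple is fitted to the
boundary equation `15 c_0 = c_1 + 6`. -/
def epsPhiLimit (m : ℕ) : ℝ :=
  4 * m / 7 + 19 / 42 + 5 / (21 * (7 + 3 * √7)) * (8 - 3 * √7) ^ m

lemma sqrt_seven_bounds : 7 / 3 < √7 ∧ √7 < 8 / 3 := by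
  have h := Real.sq_sqrt (show (0 : ℝ) ≤ 7 by norm_num)
  have h0 := Real.sqrt_nonneg 7
  constructor <;> nlinarith

lemma epsPhiLimit_zero : epsPhiLimit 0 = 1 / 3 + 5 / (14 * √7) := by
  have h := Real.sq_sqrt (show (0 : ℝ) ≤ 7 by norm_num)
  have hpos : 0 < √7 := by linarith [sqrt_seven_bounds.1]
  have hden : 0 < 7 + 3 * √7 := by linarith
  simp only [epsPhiLimit, Nat.cast_zero, pow_zero]
  field_simp
  nlinarith

lemma epsPhiLimit_zero_rec : 15 * epsPhiLimit 0 = epsPhiLimit 1 + 6 := by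
  have hden : 0 < 7 + 3 * √7 := by linarith [sqrt_seven_bounds.1]
  simp only [epsPhiLimit]
  field_simp
  ring

lemma epsPhiLimit_succ_rec (m : ℕ) :
    16 * epsPhiLimit (m + 1) = epsPhiLimit m + epsPhiLimit (m + 2) + 8 * m + 43 / 3 := by
  have hr : (8 - 3 * √7) ^ 2 = 16 * (8 - 3 * √7) - 1 := by
    nlinarith [Real.sq_sqrt (show (0 : ℝ) ≤ 7 by norm_num)]
  simp only [epsPhiLimit, pow_succ]
  push_cast
  linear_combination (-(5 / (21 * (7 + 3 * √7)) * (8 - 3 * √7) ^ m)) * hr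

lemma epsPhiLimit_nonneg (m : ℕ) : 0 ≤ epsPhiLimit m := by
  have hr : 0 < 8 - 3 * √7 := by linarith [sqrt_seven_bounds.2]
  have hden : 0 < 7 + 3 * √7 := by linarith [sqrt_seven_bounds.1]
  unfold epsPhiLimit
  positivity

lemma epsPhiLimit_le (m : ℕ) : epsPhiLimit m ≤ m + 1 := by
  obtain ⟨h1, h2⟩ := sqrt_seven_bounds
  have hA : 5 / (21 * (7 + 3 * √7)) ≤ 5 / 147 :=
    div_le_div_of_nonneg_left (by norm_num) (by norm_num) (by linarith)
  have hr : (8 - 3 * √7) ^ m ≤ 1 := pow_le_one₀ (by linarith) (by linarith)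
  have hA0 : 0 ≤ 5 / (21 * (7 + 3 * √7)) := by positivity
  have hm : (0 : ℝ) ≤ m := m.cast_nonneg
  unfold epsPhiLimit
  nlinarith [mul_le_mul hA hr (pow_nonneg (by linarith) m) (by norm_num)]

def epsPhiError (m n : ℕ) : ℝ := 2 ^ n * (hash epsX (phiM m) (invPow n) : ℝ) - epsPhiLimit m

lemma epsPhiError_zero_succ (n : ℕ) :
    epsPhiError 0 (n + 1) = (epsPhiError 0 n + epsPhiError 1 n) / 16 := by
  have h2 : (2 : ℝ) ^ n * (1 / 2 ^ n) = 1 := by field_simp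
  simp only [epsPhiError, hash_epsX_phiM_zero_invPow_succ, pow_succ]
  push_cast
  linear_combination (3 / 8 : ℝ) * h2 - epsPhiLimit_zero_rec / 16

lemma epsPhiError_succ_succ (m n : ℕ) :
    epsPhiError (m + 1) (n + 1) =
      (epsPhiError m n + epsPhiError (m + 2) n) / 16 - (1 / 4) ^ n / 48 := by
  have h2 : (2 : ℝ) ^ n * (1 / 2 ^ n) = 1 := by field_simp
  have h8 : (2 : ℝ) ^ n * (1 / 8 ^ n) = (1 / 4) ^ n := by
    rw [div_pow, one_pow, show (8 : ℝ) ^ n = 2 ^ n * 4 ^ n by rw [← mul_pow]; norm_num]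
    field_simp
  simp only [epsPhiError, hash_epsX_phiM_succ_invPow_succ, hash_epsX_epsX_invPow, pow_succ]
  push_cast
  linear_combination ((8 * m + 14) / 16 + 1 / 48 : ℝ) * h2 - h8 / 48
    - epsPhiLimit_succ_rec m / 16

lemma abs_epsPhiError_zero_le (m : ℕ) : |epsPhiError m 0| ≤ m + 1 := by
  rw [epsPhiError, hash_invPow_zero, evI_epsX_zero, evI_epsX_one, sub_zero, zero_mul,
    Rat.cast_zero, mul_zero, zero_sub, abs_neg, abs_of_nonneg (epsPhiLimit_nonneg m)]
  exact epsPhiLimit_le m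

lemma abs_epsPhiError_succ_le (m n : ℕ) :
    |epsPhiError m (n + 1)| ≤
      (|epsPhiError (m - 1) n| + |epsPhiError (m + 1) n|) / 16 + (1 / 4) ^ n / 48 := by
  have h4 : (0 : ℝ) ≤ (1 / 4) ^ n / 48 := by positivity
  cases m with
  | zero =>
    rw [epsPhiError_zero_succ, abs_div, abs_of_pos (by norm_num : (0 : ℝ) < 16)]
    linarith [abs_add_le (epsPhiError 0 n) (epsPhiError 1 n)]
  | succ m =>
    rw [epsPhiError_succ_succ, add_tsub_cancel_right]
    calc _ ≤ |(epsPhiError m n + epsPhiError (m + 2) n) / 16| + |(1 / 4 : ℝ) ^ n / 48| :=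
          abs_sub _ _
      _ ≤ _ := by
        rw [abs_div, abs_of_pos (by norm_num : (0 : ℝ) < 16), abs_of_nonneg h4]
        linarith [abs_add_le (epsPhiError m n) (epsPhiError (m + 2) n)]

/-- Theorem 2.4: with `E₁ = ε # φ₀`, `lim_{n→∞} 2ⁿ E₁(2^{−n}) = 1/3 + 5/(14√7)`. -/
theorem statement9 :
    Filter.Tendsto (fun n : ℕ => ((2 ^ n * hash epsX (phiM 0) (invPow n) : ℚ) : ℝ))
      Filter.atTop (nhds (1 / 3 + 5 / (14 * Real.sqrt 7))) := by
  have h := (tendsto_zero_of_abs_le_neighbors epsPhiError abs_epsPhiError_zero_le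
    abs_epsPhiError_succ_le 0).add_const (epsPhiLimit 0)
  rw [zero_add] at h
  rw [← epsPhiLimit_zero]
  refine h.congr fun n => ?_
  rw [epsPhiError]
  push_cast
  ring

end
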